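/- For integers v ≥ 2 and m ≥ 2, the binomial coefficient satisfies C(mv, m) < u(v) · m^(-1/2) · v^(vm) / (v-1)^((v-1)m), where u(v) = (1/√(2π)) · (v/(v-1))^(1/2). -/

import Mathlib

/-!
Write `n! = s(n) √(2n) (n/e)^n` with `s` the Stirling sequence. Then `C(a+b, a)` is the
Stirling-type main term `√((a+b)/(2πab)) (a+b)^(a+b) / (a^a b^b)` times
`s(a+b) √π / (s(a) s(b))`, and this factor is `< 1` because `s` is strictly decreasing and
bounded below by its limit `√π`. The theorem is the case `a = m`, `b = (v-1)m`.
-/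

open Real

/-- The constant `u(v)` in the upper bound on the central-type binomial coefficient. -/
noncomputable def uConst (v : ℕ) : ℝ := (2 * π) ^ (-(1/2 : ℝ)) * ((v : ℝ) / ((v : ℝ) - 1)) ^ ((1/2 : ℝ))

open Nat

namespace Stirling

theorem stirlingSeq'_strictAnti : StrictAnti (stirlingSeq ∘ succ) := by
  refine strictAnti_nat_of_succ_lt fun n => ?_
  have hlog : 0 < log (stirlingSeq (n + 1)) - log (stirlingSeq (n + 2)) :=
    hasSum_lt (f := 0) (fun _ => by positivity) (i := 0) (by positivity) hasSum_zero
      (log_stirlingSeq_sdiff_hasSum n)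
  simpa using (log_lt_log_iff (stirlingSeq'_pos _) (stirlingSeq'_pos _)).mp (by linarith)

theorem stirlingSeq_lt_of_lt {i j : ℕ} (hi : i ≠ 0) (hij : i < j) :
    stirlingSeq j < stirlingSeq i := by
  obtain ⟨i, rfl⟩ := exists_eq_succ_of_ne_zero hi
  obtain ⟨j, rfl⟩ := exists_eq_succ_of_ne_zero (by omega : j ≠ 0)
  exact stirlingSeq'_strictAnti (succ_lt_succ_iff.mp hij)

theorem factorial_eq_stirlingSeq_mul {n : ℕ} (hn : n ≠ 0) :
    (n ! : ℝ) = stirlingSeq n * (√(2 * n) * (n / exp 1) ^ n) := by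
  rw [stirlingSeq, div_mul_cancel₀]
  positivity

theorem cast_add_choose_eq_stirlingSeq_mul {a b : ℕ} (ha : a ≠ 0) (hb : b ≠ 0) :
    ((a + b).choose a : ℝ) = stirlingSeq (a + b) * √π / (stirlingSeq a * stirlingSeq b) *
      (√((a + b) / (2 * π * a * b)) * ((a + b) ^ (a + b) / (a ^ a * b ^ b))) := by
  have hsqrt : √π * √((a + b) / (2 * π * a * b)) * (√(2 * a) * √(2 * b)) = √(2 * (a + b)) := by
    rw [← sqrt_mul pi_pos.le, ← sqrt_mul (by positivity : (0 : ℝ) ≤ 2 * a),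
      ← sqrt_mul (by positivity)]
    congr 1
    field_simp
  rw [cast_add_choose, factorial_eq_stirlingSeq_mul ha, factorial_eq_stirlingSeq_mul hb,
    factorial_eq_stirlingSeq_mul (by omega), cast_add, ← hsqrt, div_pow, div_pow, div_pow,
    pow_add (rexp 1)]
  field_simp

theorem cast_add_choose_lt {a b : ℕ} (ha : a ≠ 0) (hb : b ≠ 0) :
    ((a + b).choose a : ℝ) <
      √((a + b) / (2 * π * a * b)) * ((a + b) ^ (a + b) / (a ^ a * b ^ b)) := by
  have hpi : 0 < √π := by positivity
  have hsb := sqrt_pi_le_stirlingSeq hb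
  have hsa := hpi.trans_le (sqrt_pi_le_stirlingSeq ha)
  have hratio : stirlingSeq (a + b) * √π / (stirlingSeq a * stirlingSeq b) < 1 := by
    rw [div_lt_one (mul_pos hsa (hpi.trans_le hsb))]
    calc stirlingSeq (a + b) * √π < stirlingSeq a * √π := by
          gcongr
          exact stirlingSeq_lt_of_lt ha (by omega)
      _ ≤ stirlingSeq a * stirlingSeq b := by gcongr
  rw [cast_add_choose_eq_stirlingSeq_mul ha hb]
  exact mul_lt_of_lt_one_left (by positivity) hratio

end Stirling

theorem uConst_mul_rpow_neg_half {v : ℕ} (hv : 1 < v) {x : ℝ} (hx : 0 < x) :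
    uConst v * x ^ (-(1 / 2) : ℝ) = √(v / (2 * π * x * (v - 1))) := by
  have hv' : (1 : ℝ) < v := by exact_mod_cast hv
  rw [uConst, rpow_neg (by positivity), rpow_neg hx.le, ← sqrt_eq_rpow, ← sqrt_eq_rpow,
    ← sqrt_eq_rpow, ← sqrt_inv, ← sqrt_inv, ← sqrt_mul (by positivity), ← sqrt_mul (by positivity)]
  congr 1
  field_simp

theorem binom_upper_bound (v m : ℕ) (hv : 2 ≤ v) (hm : 2 ≤ m) :
    ((m * v).choose m : ℝ) <
      uConst v * (m : ℝ) ^ (-(1/2 : ℝ)) * (v : ℝ) ^ (v * m) / ((v : ℝ) - 1) ^ ((v - 1) * m) := by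
  obtain ⟨k, rfl⟩ : ∃ k, v = k + 1 := ⟨v - 1, by omega⟩
  have hk : k ≠ 0 := by omega
  have hm0 : m ≠ 0 := by omega
  rw [show m * (k + 1) = m + k * m by ring]
  refine (Stirling.cast_add_choose_lt hm0 (mul_ne_zero hk hm0)).trans_eq ?_
  rw [uConst_mul_rpow_neg_half (by omega) (by positivity), add_tsub_cancel_right]
  push_cast
  rw [add_sub_cancel_right, mul_div_assoc, show (k + 1) * m = m + k * m by ring]
  congr 1
  · congr 1
    field_simp
    ring
  · rw [show (m : ℝ) + k * m = (k + 1) * m by ring, mul_pow, mul_pow, pow_add (m : ℝ)]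
    field_simp
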